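/- arXiv:1805.01863 — 8 statements merged into one kernel-verified Lean document; each statement's English description precedes it below -/
import Mathlib

section
/- Fix c ∈ γ with 0 < p_C(c) < ∞. Suppose the conditional independence identity J(A,B|C)(a,b,c) = J(A|C)(a,c) * J(B|C)(b,c) holds for all a ∈ α and b ∈ β. Then for every a ∈ α and b ∈ β with 0 < p_BC(b,c) < ∞ and ∫⁻ p a b' c ∂ν(b') < ∞, conditioning on the independent variables can be dropped: J(A|B,C)(a,b,c) = J(A|C)(a,c). (This is the soundness of Shuffle's independence coercion CIND: if A ⫫ B | C then a density for Pr(A|C) is also a density for Pr(A|B,C).) -/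
open MeasureTheory ENNReal

theorem ENNReal.div_eq_div_of_div_eq_div_mul_div {x a b c : ℝ≥0∞}
    (hc0 : c ≠ 0) (hc : c ≠ ∞) (hb0 : b ≠ 0) (hb : b ≠ ∞)
    (h : x / c = a / c * (b / c)) : x / b = a / c := by
  have hx : x = a * (b / c) := by
    calc x = c * (x / c) := (ENNReal.mul_div_cancel hc0 hc).symm
      _ = c * (a / c) * (b / c) := by rw [h, mul_assoc]
      _ = a * (b / c) := by rw [ENNReal.mul_div_cancel hc0 hc]
  rw [ENNReal.div_eq_div_iff hc0 hc hb0 hb, hx, mul_left_comm,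
    ENNReal.mul_div_cancel hc0 hc, mul_comm]

theorem cind_sound_general {α β γ : Type*} [MeasurableSpace α] [MeasurableSpace β]
    (μ : Measure α) (ν : Measure β)
    (p : α → β → γ → ℝ≥0∞)
    (c : γ)
    (hC : 0 < ∫⁻ b', ∫⁻ a', p a' b' c ∂μ ∂ν)
    (hC' : (∫⁻ b', ∫⁻ a', p a' b' c ∂μ ∂ν) < ∞)
    (hindep : ∀ (a : α) (b : β),
      p a b c / ∫⁻ b', ∫⁻ a', p a' b' c ∂μ ∂ν =
        ((∫⁻ b', p a b' c ∂ν) / ∫⁻ b', ∫⁻ a', p a' b' c ∂μ ∂ν) *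
          ((∫⁻ a', p a' b c ∂μ) / ∫⁻ b', ∫⁻ a', p a' b' c ∂μ ∂ν))
    (a : α) (b : β)
    (hBC : 0 < ∫⁻ a', p a' b c ∂μ) (hBC' : ∫⁻ a', p a' b c ∂μ < ∞) :
    p a b c / ∫⁻ a', p a' b c ∂μ =
      (∫⁻ b', p a b' c ∂ν) / ∫⁻ b', ∫⁻ a', p a' b' c ∂μ ∂ν :=
  ENNReal.div_eq_div_of_div_eq_div_mul_div hC.ne' hC'.ne hBC.ne' hBC'.ne (hindep a b)

/-- Soundness of Shuffle's independence coercion CIND: if `A ⫫ B | C`, then a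
density for Pr(A|C) is also a density for Pr(A|B,C). -/
theorem cind_sound {α β γ : Type*} [MeasurableSpace α] [MeasurableSpace β] [MeasurableSpace γ]
    (μ : Measure α) (ν : Measure β) (ρ : Measure γ)
    [SigmaFinite μ] [SigmaFinite ν] [SigmaFinite ρ]
    (p : α → β → γ → ℝ≥0∞)
    (hp : Measurable fun x : α × β × γ => p x.1 x.2.1 x.2.2)
    (c : γ)
    (hC : 0 < ∫⁻ b', ∫⁻ a', p a' b' c ∂μ ∂ν)
    (hC' : (∫⁻ b', ∫⁻ a', p a' b' c ∂μ ∂ν) < ∞)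
    (hindep : ∀ (a : α) (b : β),
      p a b c / ∫⁻ b', ∫⁻ a', p a' b' c ∂μ ∂ν =
        ((∫⁻ b', p a b' c ∂ν) / ∫⁻ b', ∫⁻ a', p a' b' c ∂μ ∂ν) *
          ((∫⁻ a', p a' b c ∂μ) / ∫⁻ b', ∫⁻ a', p a' b' c ∂μ ∂ν))
    (a : α) (b : β)
    (hBC : 0 < ∫⁻ a', p a' b c ∂μ) (hBC' : ∫⁻ a', p a' b c ∂μ < ∞)
    (hAC' : (∫⁻ b', p a b' c ∂ν) < ∞) :
    p a b c / ∫⁻ a', p a' b c ∂μ =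
      (∫⁻ b', p a b' c ∂ν) / ∫⁻ b', ∫⁻ a', p a' b' c ∂μ ∂ν :=
  cind_sound_general μ ν p c hC hC' hindep a b hBC hBC'
end

section
/- Let n : ℕ, let α : Fin n → Type be measurable spaces with σ-finite measures μ i, and let d : Fin n → ((Π i, α i) → ℝ≥0∞) be measurable functions such that (i) each d i depends only on the coordinates j ≤ i (i.e., d i x = d i y whenever x j = y j for all j ≤ i), and (ii) each d i is normalized over its own coordinate: for every x, ∫⁻ d i (Function.update x i t) ∂(μ i)(t) = 1. Then for every k : Fin n and every x, marginalizing the product density ∏ i, d i over all coordinates strictly greater than k yields the prefix product: the iterated lower integral (lmarginal) of (fun x => ∏ i, d i x) over the coordinate set {i | k < i} evaluated at x equals ∏ i in {i | i ≤ k}, d i x. (This telescoping marginalization is the core computation in the paper's Model Validity theorem for schedulable models.) -/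
/-!
Integrate the coordinates out from the top down. When the least remaining coordinate `a` is
integrated, every surviving factor other than `d a` only sees coordinates below `a`, so it comes
out of the integral as a constant, and `d a` integrates to `1`.
-/

open MeasureTheory ENNReal Finset Function

theorem DependsOn.apply_update_of_notMem {ι : Type*} [DecidableEq ι] {α : ι → Type*} {β : Type*}
    {f : (Π i, α i) → β} {s : Set ι} (hf : DependsOn f s) {i : ι} (hi : i ∉ s)
    (x : Π i, α i) (t : α i) : f (Function.update x i t) = f x :=
  hf fun _ hj => update_of_ne (ne_of_mem_of_not_mem hj hi) t x

theorem IsUpperSet.of_insert_of_forall_lt {δ : Type*} [LinearOrder δ] {a : δ} {s : Finset δ}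
    (hs : IsUpperSet ((insert a s : Finset δ) : Set δ)) (ha : ∀ x ∈ s, a < x) :
    IsUpperSet (s : Set δ) := by
  intro i j hij hi
  rcases mem_insert.1 (hs hij (mem_insert_of_mem hi)) with rfl | hj
  · exact absurd hij (ha i hi).not_ge
  · exact hj

theorem lmarginal_prod_of_isUpperSet {δ : Type*} [Fintype δ] [LinearOrder δ] {X : δ → Type*}
    [∀ i, MeasurableSpace (X i)] (μ : ∀ i, Measure (X i)) [∀ i, SigmaFinite (μ i)]
    {d : δ → (Π i, X i) → ℝ≥0∞} (hmeas : ∀ i, Measurable (d i))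
    (hdep : ∀ i, DependsOn (d i) (Set.Iic i)) (hnorm : ∀ i x, ∫⁻ t, d i (update x i t) ∂μ i = 1)
    {s : Finset δ} (hs : IsUpperSet (s : Set δ)) :
    ∫⋯∫⁻_s, (fun x => ∏ i, d i x) ∂μ = fun x => ∏ i ∈ sᶜ, d i x := by
  induction s using Finset.induction_on_min with
  | empty => simp
  | insert a s ha ih =>
    have ha_notMem : a ∉ s := fun h => (ha a h).false
    have hlt : ∀ j ∉ insert a s, j < a := fun j hj =>
      lt_of_not_ge fun h => hj (hs h (mem_insert_self a s))
    have hcompl : sᶜ = insert a (insert a s)ᶜ := by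
      rw [compl_insert, insert_erase (mem_compl.2 ha_notMem)]
    ext x
    rw [lmarginal_insert _ (Finset.measurable_prod _ fun i _ => hmeas i) ha_notMem,
      ih (hs.of_insert_of_forall_lt ha)]
    calc ∫⁻ t, ∏ i ∈ sᶜ, d i (update x a t) ∂μ a
        = ∫⁻ t, d a (update x a t) * ∏ i ∈ (insert a s)ᶜ, d i x ∂μ a := by
          refine lintegral_congr fun t => ?_
          rw [hcompl, prod_insert (notMem_compl.2 (mem_insert_self a s))]
          congr 1
          exact prod_congr rfl fun j hj =>
            (hdep j).apply_update_of_notMem (not_le.2 (hlt j (mem_compl.1 hj))) x t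
      _ = ∏ i ∈ (insert a s)ᶜ, d i x := by
          rw [lintegral_mul_const (f := fun t => d a (update x a t)) _
            ((hmeas a).comp (measurable_update x)), hnorm, one_mul]

/-- Telescoping marginalization for schedulable models: marginalizing the
product density `∏ i, d i` over all coordinates strictly greater than `k`
yields the prefix product `∏ i ≤ k, d i`. -/
theorem lmarginal_prod_schedulable (n : ℕ) (α : Fin n → Type)
    [∀ i, MeasurableSpace (α i)]
    (μ : ∀ i, Measure (α i)) [∀ i, SigmaFinite (μ i)]
    (d : Fin n → ((∀ i, α i) → ℝ≥0∞))
    (hmeas : ∀ i, Measurable (d i))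
    (hdep : ∀ (i : Fin n) (x y : ∀ j, α j), (∀ j, j ≤ i → x j = y j) → d i x = d i y)
    (hnorm : ∀ (i : Fin n) (x : ∀ j, α j),
      ∫⁻ t, d i (Function.update x i t) ∂(μ i) = 1)
    (k : Fin n) (x : ∀ i, α i) :
    MeasureTheory.lmarginal μ (Finset.univ.filter fun i => k < i)
        (fun x => ∏ i, d i x) x =
      ∏ i ∈ Finset.univ.filter (fun i => i ≤ k), d i x := by
  have hupper : IsUpperSet ((univ.filter fun i => k < i : Finset (Fin n)) : Set (Fin n)) := by
    intro i j hij hi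
    simpa using (mem_filter.1 hi).2.trans_le hij
  rw [lmarginal_prod_of_isUpperSet μ hmeas (fun i _ _ h => hdep i _ _ h) hnorm hupper,
    compl_filter]
  simp only [not_lt]
end

section
/- Let n : ℕ, let α : Fin n → Type be measurable spaces with σ-finite measures μ i, and let d : Fin n → ((Π i, α i) → ℝ≥0∞) be measurable functions such that (i) each d i depends only on the coordinates j ≤ i (i.e., d i x = d i y whenever x j = y j for all j ≤ i), and (ii) for every i and every x, ∫⁻ d i (Function.update x i t) ∂(μ i)(t) = 1. Then for every k : Fin n and every x at which ∏ i in {i | i < k}, d i x is positive and finite, each factor equals the corresponding conditional density of the joint: d k x = (lmarginal of (∏ i, d i) over {i | k < i}) x / (lmarginal of (∏ i, d i) over {i | k ≤ i}) x. (This is the content of the paper's Theorem 1, Model Validity: in a valid model, each density definition equals the conditional density J(A_k | x_{<k}) determined by the joint density.) -/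
/-!
Since `d i` sees only the coordinates `≤ i`, integrating `∏ i ∈ s, d i` over the coordinates in
`s` can be done innermost-largest, each factor integrating to `1` by normalization. For an upper
set `s` the factors outside `s` ignore the coordinates in `s`, so the marginal of the joint density
over `s` is `∏ i ∉ s, d i`. Taking `s = {i | k < i}` and `s = {i | k ≤ i}`, the ratio is `d k`.
-/

open MeasureTheory ENNReal Finset

namespace MeasureTheory

variable {ι : Type*} [DecidableEq ι] {X : ι → Type*} [∀ i, MeasurableSpace (X i)]
  {μ : ∀ i, Measure (X i)}

theorem lmarginal_mul_left_of_dependsOn {s : Finset ι} {g f : (∀ i, X i) → ℝ≥0∞}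
    (hg : DependsOn g (↑s)ᶜ) (hf : Measurable f) (x : ∀ i, X i) :
    lmarginal μ s (fun y => g y * f y) x = g x * lmarginal μ s f x := by
  have hg_const : ∀ y, g (Function.updateFinset x s y) = g x :=
    fun y => hg fun i hi => by
      simp only [Function.updateFinset, dif_neg (show i ∉ s from hi)]
  simp only [lmarginal, hg_const]
  exact lintegral_const_mul _ (hf.comp measurable_updateFinset)

variable [LinearOrder ι] [∀ i, SigmaFinite (μ i)] {d : ι → (∀ i, X i) → ℝ≥0∞}

theorem lmarginal_prod_eq_one (hmeas : ∀ i, Measurable (d i))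
    (hdep : ∀ i, DependsOn (d i) (Set.Iic i))
    (hnorm : ∀ i x, ∫⁻ t, d i (Function.update x i t) ∂μ i = 1) (s : Finset ι) :
    lmarginal μ s (fun x => ∏ i ∈ s, d i x) = 1 := by
  induction s using Finset.induction_on_min with
  | empty => ext x; simp
  | insert a s ha_lt ih =>
    have ha : a ∉ s := fun h => lt_irrefl a (ha_lt a h)
    have hda : DependsOn (d a) (↑s)ᶜ :=
      (hdep a).mono fun j hj hjs => not_lt.2 hj (ha_lt j hjs)
    ext x
    simp_rw [prod_insert ha]
    rw [lmarginal_insert _ (by fun_prop) ha]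
    have hprod : Measurable fun y => ∏ i ∈ s, d i y := by fun_prop
    simp_rw [lmarginal_mul_left_of_dependsOn hda hprod, ih, Pi.one_apply, mul_one, hnorm]

theorem lmarginal_prod_eq_prod_compl [Fintype ι] (hmeas : ∀ i, Measurable (d i))
    (hdep : ∀ i, DependsOn (d i) (Set.Iic i))
    (hnorm : ∀ i x, ∫⁻ t, d i (Function.update x i t) ∂μ i = 1)
    {s : Finset ι} (hs : IsUpperSet (s : Set ι)) (x : ∀ i, X i) :
    lmarginal μ s (fun x => ∏ i, d i x) x = ∏ i ∈ sᶜ, d i x := by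
  have hcompl : DependsOn (fun y => ∏ i ∈ sᶜ, d i y) (↑s)ᶜ := fun y z h =>
    prod_congr rfl fun i hi => hdep i fun j hj =>
      h j fun hjs => mem_compl.1 hi (hs (Set.mem_Iic.1 hj) hjs)
  simp_rw [← prod_compl_mul_prod s]
  rw [lmarginal_mul_left_of_dependsOn hcompl (by fun_prop), lmarginal_prod_eq_one hmeas hdep hnorm,
    Pi.one_apply, mul_one]

end MeasureTheory

/-- Model Validity (Theorem 1 of the paper): in a valid (schedulable,
normalized) model, each density definition `d k` equals the conditional
density of the joint density determined by the model. -/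
theorem model_validity (n : ℕ) (α : Fin n → Type)
    [∀ i, MeasurableSpace (α i)]
    (μ : ∀ i, Measure (α i)) [∀ i, SigmaFinite (μ i)]
    (d : Fin n → ((∀ i, α i) → ℝ≥0∞))
    (hmeas : ∀ i, Measurable (d i))
    (hdep : ∀ (i : Fin n) (x y : ∀ j, α j), (∀ j, j ≤ i → x j = y j) → d i x = d i y)
    (hnorm : ∀ (i : Fin n) (x : ∀ j, α j),
      ∫⁻ t, d i (Function.update x i t) ∂(μ i) = 1)
    (k : Fin n) (x : ∀ i, α i)
    (hpos : 0 < ∏ i ∈ Finset.univ.filter (fun i => i < k), d i x)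
    (hfin : (∏ i ∈ Finset.univ.filter (fun i => i < k), d i x) < ∞) :
    d k x =
      MeasureTheory.lmarginal μ (Finset.univ.filter fun i => k < i)
          (fun x => ∏ i, d i x) x /
        MeasureTheory.lmarginal μ (Finset.univ.filter fun i => k ≤ i)
          (fun x => ∏ i, d i x) x := by
  have hdepOn : ∀ i, DependsOn (d i) (Set.Iic i) := fun i _ _ h => hdep i _ _ h
  have hIoi : IsUpperSet (↑(univ.filter fun i => k < i) : Set (Fin n)) := by
    simpa only [filter_lt_eq_Ioi, coe_Ioi] using isUpperSet_Ioi k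
  have hIci : IsUpperSet (↑(univ.filter fun i => k ≤ i) : Set (Fin n)) := by
    simpa only [filter_le_eq_Ici, coe_Ici] using isUpperSet_Ici k
  rw [lmarginal_prod_eq_prod_compl hmeas hdepOn hnorm hIoi,
    lmarginal_prod_eq_prod_compl hmeas hdepOn hnorm hIci, compl_filter, compl_filter]
  simp only [not_lt, not_le]
  rw [filter_ge_eq_Iic, ← Iio_insert, prod_insert notMem_Iio_self, ← filter_gt_eq_Iio,
    ENNReal.mul_div_cancel_right hpos.ne' hfin.ne]
end

section
/- Let f : ℝ → ℝ≥0∞ be measurable with ∫⁻ f(x) dx = 1 (with respect to Lebesgue measure). Define the cumulative distribution function G : ℝ → ℝ by G(r) = (∫⁻_{Iic r} f dvolume).toReal, and the generalized inverse (inverse-transform sampler) ψ : ℝ → ℝ by ψ(u) = sInf {r : ℝ | u < G r}. Then for every measurable h : ℝ → ℝ≥0∞, ∫⁻_{u ∈ Ioo 0 1} h(ψ u) dvolume(u) = ∫⁻ h(x) * f(x) dvolume(x). (This is the correctness of inverse transform sampling in the continuous case, used in the paper's SLIFT soundness proof: the expectation of any nonnegative function under the sampler equals its expectation under the density.) -/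
open MeasureTheory ENNReal Set Filter Topology ProbabilityTheory

/-!
Let `F` be the cumulative distribution function and `Q u = inf {r | u < F r}` its generalized
inverse. For `u ∈ (0, 1)`, `u < F r` forces `Q u ≤ r`, and `Q u ≤ r` forces `u ≤ F r` by
right-continuity of `F`. Hence `{u ∈ (0, 1) | Q u ≤ r}` lies between `(0, F r)` and `(0, F r]`,
so it has Lebesgue measure `F r`: the image of the uniform distribution on `(0, 1)` under `Q`
has distribution function `F`, and the change of variables formula for image measures concludes.
-/

/-- Only meaningful for `u ∈ (0, 1)` when `F` is a distribution function: elsewhere the set is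
empty or unbounded below and `sInf` returns the junk value `0`. -/
noncomputable def quantile (F : ℝ → ℝ) (u : ℝ) : ℝ := sInf {r | u < F r}

section quantile

variable {F : ℝ → ℝ} {u r l : ℝ}

lemma bddBelow_setOf_lt_of_tendsto_atBot (hF_mono : Monotone F) (hF : Tendsto F atBot (𝓝 l))
    (hu : l < u) : BddBelow {r | u < F r} := by
  obtain ⟨r₀, hr₀⟩ := (hF.eventually (gt_mem_nhds hu)).exists
  exact ⟨r₀, fun r hr => le_of_not_gt fun hlt => (hF_mono hlt.le).not_gt (hr₀.trans hr)⟩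

lemma nonempty_setOf_lt_of_tendsto_atTop (hF : Tendsto F atTop (𝓝 l)) (hu : u < l) :
    {r | u < F r}.Nonempty :=
  (hF.eventually (lt_mem_nhds hu)).exists

lemma quantile_le_of_lt (hbdd : BddBelow {r | u < F r}) (hr : u < F r) : quantile F u ≤ r :=
  csInf_le hbdd hr

end quantile

namespace StieltjesFunction

variable (F : StieltjesFunction ℝ) {u r : ℝ}

lemma le_of_quantile_le (hne : {r | u < F r}.Nonempty) (hr : quantile F u ≤ r) : u ≤ F r := by
  have hright : ∀ s, r < s → u ≤ F s := fun s hs => by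
    obtain ⟨r', hr', hr's⟩ := exists_lt_of_csInf_lt hne (hr.trans_lt hs)
    exact hr'.le.trans (F.mono hr's.le)
  exact ge_of_tendsto ((F.right_continuous r).mono Ioi_subset_Ici_self)
    (eventually_nhdsWithin_of_forall hright)

lemma monotoneOn_quantile (hF0 : Tendsto F atBot (𝓝 0)) (hF1 : Tendsto F atTop (𝓝 1)) :
    MonotoneOn (quantile F) (Ioo 0 1) := fun _ hu _ hv huv =>
  csInf_le_csInf (bddBelow_setOf_lt_of_tendsto_atBot F.mono hF0 hu.1)
    (nonempty_setOf_lt_of_tendsto_atTop hF1 hv.2) fun _ hr => huv.trans_lt hr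

lemma volume_quantile_preimage_Iic (hF0 : Tendsto F atBot (𝓝 0)) (hF1 : Tendsto F atTop (𝓝 1))
    (r : ℝ) : volume (quantile F ⁻¹' Iic r ∩ Ioo 0 1) = ENNReal.ofReal (F r) := by
  have hF_le_one : F r ≤ 1 := F.mono.ge_of_tendsto hF1 r
  have hlower : Ioo 0 (F r) ⊆ quantile F ⁻¹' Iic r ∩ Ioo 0 1 := fun u hu =>
    ⟨quantile_le_of_lt (bddBelow_setOf_lt_of_tendsto_atBot F.mono hF0 hu.1) hu.2,
      hu.1, hu.2.trans_le hF_le_one⟩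
  have hupper : quantile F ⁻¹' Iic r ∩ Ioo 0 1 ⊆ Ioc 0 (F r) := fun u hu =>
    ⟨hu.2.1, F.le_of_quantile_le (nonempty_setOf_lt_of_tendsto_atTop hF1 hu.2.2) hu.1⟩
  refine le_antisymm ?_ ?_
  · simpa using measure_mono (μ := volume) hupper
  · simpa using measure_mono (μ := volume) hlower

lemma aemeasurable_quantile (hF0 : Tendsto F atBot (𝓝 0)) (hF1 : Tendsto F atTop (𝓝 1)) :
    AEMeasurable (quantile F) (volume.restrict (Ioo 0 1)) :=
  aemeasurable_restrict_of_monotoneOn measurableSet_Ioo (F.monotoneOn_quantile hF0 hF1)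

lemma map_quantile_volume_Ioo (hF0 : Tendsto F atBot (𝓝 0)) (hF1 : Tendsto F atTop (𝓝 1)) :
    (volume.restrict (Ioo 0 1)).map (quantile F) = F.measure := by
  have := F.isFiniteMeasure hF0 hF1
  refine (Measure.ext_of_Iic _ _ fun r => ?_).symm
  rw [F.measure_Iic hF0, sub_zero,
    Measure.map_apply_of_aemeasurable (F.aemeasurable_quantile hF0 hF1) measurableSet_Iic,
    Measure.restrict_apply' measurableSet_Ioo, F.volume_quantile_preimage_Iic hF0 hF1]

end StieltjesFunction

lemma map_quantile_cdf_volume_Ioo (μ : Measure ℝ) [IsProbabilityMeasure μ] :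
    (volume.restrict (Ioo 0 1)).map (quantile (cdf μ)) = μ := by
  rw [(cdf μ).map_quantile_volume_Ioo (tendsto_cdf_atBot μ) (tendsto_cdf_atTop μ), measure_cdf]

/-- Correctness of inverse transform sampling in the continuous case (used in
the SLIFT soundness proof): the expectation of any nonnegative function under
the inverse-transform sampler equals its expectation under the density. -/
theorem inverse_transform_sampling_continuous
    (f : ℝ → ℝ≥0∞) (hf : Measurable f) (hf1 : ∫⁻ x, f x = 1)
    (G : ℝ → ℝ) (hG : ∀ r, G r = (∫⁻ x in Iic r, f x).toReal)
    (ψ : ℝ → ℝ) (hψ : ∀ u, ψ u = sInf {r : ℝ | u < G r})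
    (h : ℝ → ℝ≥0∞) (hh : Measurable h) :
    ∫⁻ u in Ioo (0 : ℝ) 1, h (ψ u) = ∫⁻ x, h x * f x := by
  set μ := volume.withDensity f
  have : IsProbabilityMeasure μ :=
    ⟨by rw [withDensity_apply _ MeasurableSet.univ, Measure.restrict_univ, hf1]⟩
  obtain rfl : G = cdf μ := funext fun r => by
    rw [hG, cdf_eq_real, measureReal_def, withDensity_apply f measurableSet_Iic]
  obtain rfl : ψ = quantile (cdf μ) := funext hψ
  calc ∫⁻ u in Ioo (0 : ℝ) 1, h (quantile (cdf μ) u)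
      = ∫⁻ x, h x ∂(volume.restrict (Ioo 0 1)).map (quantile (cdf μ)) :=
        (lintegral_map' hh.aemeasurable
          ((cdf μ).aemeasurable_quantile (tendsto_cdf_atBot μ) (tendsto_cdf_atTop μ))).symm
    _ = ∫⁻ x, h x * f x := by
        rw [map_quantile_cdf_volume_Ioo, lintegral_withDensity_eq_lintegral_mul _ hf hh]
        simp only [Pi.mul_apply, mul_comm]
end

section
/- Let p : ℕ → ℝ≥0∞ satisfy ∑' n, p n = 1. Define the cumulative sums F : ℕ → ℝ by F n = (∑ j in Finset.range (n+1), p j).toReal, and for u : ℝ define the sampled index r(u) = sInf {n : ℕ | u < F n}. Then for every k : ℕ, the Lebesgue measure of the set {u ∈ Ico (0:ℝ) 1 | r u = k} equals p k. (This is the correctness of inverse transform sampling in the discrete case, used in the paper's SLIFT soundness proof: the probability that the sampler outputs k equals the probability mass p k.) -/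
open MeasureTheory ENNReal Set

/-!
The cumulative sums `C n = p 0 + ⋯ + p (n - 1)` increase from `C 0 = 0` to `1`, so the intervals
`[C k, C (k + 1))` tile `[0, 1)`. On `[C k, C (k + 1))` the sampled index is exactly `k`, and this
interval has length `p k`.
-/

theorem exists_mem_Ico_succ_of_le_of_lt {α : Type*} [LinearOrder α] {C : ℕ → α} {u : α}
    (h₀ : C 0 ≤ u) (h : ∃ n, u < C n) : ∃ m, u ∈ Ico (C m) (C (m + 1)) := by
  classical
  obtain ⟨m, hm⟩ : ∃ m, Nat.find h = m + 1 :=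
    Nat.exists_eq_succ_of_ne_zero fun hz => (hz ▸ Nat.find_spec h).not_ge h₀
  refine ⟨m, not_lt.1 (Nat.find_min h ?_), hm ▸ Nat.find_spec h⟩
  omega

namespace Monotone

variable {α : Type*} {C : ℕ → α}

theorem sInf_lt_succ_eq_of_mem_Ico [Preorder α] (hC : Monotone C) {u : α} {m : ℕ}
    (hu : u ∈ Ico (C m) (C (m + 1))) : sInf {n | u < C (n + 1)} = m := by
  have hmem : u < C (sInf {n | u < C (n + 1)} + 1) :=
    Nat.sInf_mem (s := {n | u < C (n + 1)}) ⟨m, hu.2⟩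
  refine le_antisymm (Nat.sInf_le hu.2) (not_lt.1 fun hlt => ?_)
  exact ((hC (Nat.succ_le_of_lt hlt)).trans hu.1).not_gt hmem

theorem setOf_mem_Ico_sInf_lt_succ_eq [LinearOrder α] (hC : Monotone C) {b : α}
    (hb : IsLUB (range C) b) (k : ℕ) :
    {u | u ∈ Ico (C 0) b ∧ sInf {n | u < C (n + 1)} = k} = Ico (C k) (C (k + 1)) := by
  ext u
  constructor
  · rintro ⟨hu, rfl⟩
    have hlt : ∃ n, u < C n := by simpa using (lt_isLUB_iff hb).1 hu.2
    obtain ⟨m, hm⟩ := exists_mem_Ico_succ_of_le_of_lt hu.1 hlt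
    rwa [hC.sInf_lt_succ_eq_of_mem_Ico hm]
  · intro hu
    exact ⟨⟨(hC k.zero_le).trans hu.1, hu.2.trans_le (hb.1 (mem_range_self _))⟩,
      hC.sInf_lt_succ_eq_of_mem_Ico hu⟩

end Monotone

namespace ENNReal

variable {p : ℕ → ℝ≥0∞}

theorem monotone_toReal_sum_range (hp : ∑' n, p n ≠ ∞) :
    Monotone fun n => (∑ j ∈ Finset.range n, p j).toReal := fun _ _ hab =>
  toReal_mono (ne_top_of_le_ne_top hp (ENNReal.sum_le_tsum _))
    (Finset.sum_le_sum_of_subset (Finset.range_mono hab))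

theorem isLUB_toReal_sum_range (hp : ∑' n, p n ≠ ∞) :
    IsLUB (range fun n => (∑ j ∈ Finset.range n, p j).toReal) (∑' n, p n).toReal :=
  isLUB_of_tendsto_atTop (monotone_toReal_sum_range hp)
    ((tendsto_toReal hp).comp (tendsto_nat_tsum p))

theorem volume_Ico_toReal_add {a b : ℝ≥0∞} (ha : a ≠ ∞) (hb : b ≠ ∞) :
    volume (Ico a.toReal (a + b).toReal) = b := by
  rw [Real.volume_Ico, toReal_add ha hb, add_sub_cancel_left, ofReal_toReal hb]

end ENNReal

/-- Correctness of inverse transform sampling in the discrete case (used in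
the SLIFT soundness proof): the Lebesgue measure of the set of seeds on which
the sampler outputs `k` equals the probability mass `p k`. -/
theorem inverse_transform_sampling_discrete
    (p : ℕ → ℝ≥0∞) (hp : ∑' n, p n = 1)
    (F : ℕ → ℝ) (hF : ∀ n, F n = (∑ j ∈ Finset.range (n + 1), p j).toReal)
    (r : ℝ → ℕ) (hr : ∀ u, r u = sInf {n : ℕ | u < F n})
    (k : ℕ) :
    volume {u : ℝ | u ∈ Ico (0 : ℝ) 1 ∧ r u = k} = p k := by
  have hfin : ∑' n, p n ≠ ∞ := hp ▸ one_ne_top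
  have hset : {u : ℝ | u ∈ Ico (0 : ℝ) 1 ∧ r u = k} =
      Ico (∑ j ∈ Finset.range k, p j).toReal (∑ j ∈ Finset.range (k + 1), p j).toReal := by
    simpa [hr, hF, hp] using (monotone_toReal_sum_range hfin).setOf_mem_Ico_sInf_lt_succ_eq
      (isLUB_toReal_sum_range hfin) k
  have hp_ne_top : ∀ n, p n ≠ ∞ := fun n => ne_top_of_le_ne_top hfin (ENNReal.le_tsum n)
  rw [hset, Finset.sum_range_succ,
    volume_Ico_toReal_add (sum_ne_top.2 fun j _ => hp_ne_top j) (hp_ne_top k)]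
end

section
/- Fix c ∈ γ with 0 < p_C(c) < ∞, and suppose 0 < p_BC(b,c) < ∞ for ν-almost every b. Let M_B = ν.withDensity (fun b => J(B|C)(b,c)) be the measure on β with density J(B|C)(·,c), and for each b let M_A(b) = μ.withDensity (fun a => J(A|B,C)(a,b,c)); assume b ↦ M_A(b) defines a measurable (Markov) kernel from β to α. Then the composition-product of M_B with this kernel equals the measure on β × α with density J(A,B|C): M_B ⊗ₘ (fun b => M_A(b)) = (ν.prod μ).withDensity (fun (b,a) => J(A,B|C)(a,b,c)). (This is the soundness of Shuffle's SBIND rule: sequentially composing a sampler for Pr(B|C) with a sampler for Pr(A|B,C) yields a sampler for Pr(A,B|C).) -/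
/-!
The kernel `b ↦ μ.withDensity J(A|B,C)(·,b,c)` is the constant kernel `μ` with density
`J(A|B,C)`, so composing it with `ν.withDensity J(B|C)` gives `ν.prod μ` with the product density
`J(B|C) · J(A|B,C) = (p_BC / p_C) · (p / p_BC)`. The marginal `p_BC(b,c)` cancels wherever it is
positive and finite, which holds for `ν`-almost every `b`, hence almost everywhere on `β × α`.
-/

open MeasureTheory ProbabilityTheory ENNReal
open scoped ProbabilityTheory

namespace MeasureTheory.Measure

variable {α β : Type*} {mα : MeasurableSpace α} {mβ : MeasurableSpace β}

lemma withDensity_compProd_left {μ : Measure α} [SFinite μ] {κ : Kernel α β} [IsSFiniteKernel κ]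
    {f : α → ℝ≥0∞} (hf : Measurable f) :
    μ.withDensity f ⊗ₘ κ = (μ ⊗ₘ κ).withDensity fun x ↦ f x.1 := by
  ext s hs
  rw [compProd_apply hs, lintegral_withDensity_eq_lintegral_mul _ hf
    (Kernel.measurable_kernel_prodMk_left hs), withDensity_apply _ hs, ← lintegral_indicator hs,
    lintegral_compProd ((hf.comp measurable_fst).indicator hs (f := fun x ↦ f x.1))]
  exact lintegral_congr fun a ↦
    (lintegral_indicator_const (measurable_prodMk_left hs) (f a)).symm

lemma withDensity_compProd_eq_withDensity_prod {ν : Measure α} [SFinite ν] {μ : Measure β}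
    [SFinite μ] {κ : Kernel α β} [IsSFiniteKernel κ] {f : α → ℝ≥0∞} {g : α → β → ℝ≥0∞}
    (hf : Measurable f) (hg : Measurable (Function.uncurry g))
    (hκ : ∀ a, κ a = μ.withDensity (g a)) :
    ν.withDensity f ⊗ₘ κ = (ν.prod μ).withDensity fun x ↦ f x.1 * g x.1 x.2 := by
  obtain rfl : κ = (Kernel.const α μ).withDensity g := by
    ext1 a
    rw [hκ, Kernel.withDensity_apply _ hg, Kernel.const_apply]
  rw [withDensity_compProd_left hf, compProd_withDensity hg, compProd_const,
    ← withDensity_mul (f := fun x : α × β ↦ g x.1 x.2) (g := fun x ↦ f x.1) _ hg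
      (hf.comp measurable_fst)]
  exact congrArg _ (funext fun _ ↦ mul_comm _ _)

end MeasureTheory.Measure

theorem sbind_sound_general {α β γ : Type*} [MeasurableSpace α] [MeasurableSpace β] [MeasurableSpace γ]
    (μ : Measure α) (ν : Measure β)
    [SigmaFinite μ] [SigmaFinite ν]
    (p : α → β → γ → ℝ≥0∞)
    (hp : Measurable fun x : α × β × γ => p x.1 x.2.1 x.2.2)
    (c : γ)
    (hBC : ∀ᵐ b ∂ν, 0 < (∫⁻ a', p a' b c ∂μ) ∧ (∫⁻ a', p a' b c ∂μ) < ∞)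
    (κ : Kernel β α) [IsMarkovKernel κ]
    (hκ : ∀ b : β, κ b = μ.withDensity fun a => p a b c / ∫⁻ a', p a' b c ∂μ) :
    (ν.withDensity fun b =>
        (∫⁻ a', p a' b c ∂μ) / ∫⁻ b', ∫⁻ a', p a' b' c ∂μ ∂ν) ⊗ₘ κ =
      (ν.prod μ).withDensity fun x =>
        p x.2 x.1 c / ∫⁻ b', ∫⁻ a', p a' b' c ∂μ ∂ν := by
  have hp_c : Measurable fun x : β × α ↦ p x.2 x.1 c := by fun_prop
  have hp_BC : Measurable fun b ↦ ∫⁻ a, p a b c ∂μ := hp_c.lintegral_prod_right'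
  rw [Measure.withDensity_compProd_eq_withDensity_prod (hp_BC.div_const _)
    (hp_c.div (hp_BC.comp measurable_fst)) hκ]
  refine withDensity_congr_ae ?_
  filter_upwards [Measure.quasiMeasurePreserving_fst.ae hBC] with x hx
  rw [mul_comm, ← mul_div_assoc, ENNReal.div_mul_cancel hx.1.ne' hx.2.ne]

/-- Soundness of Shuffle's SBIND rule: sequentially composing a sampler for
Pr(B|C) with a sampler for Pr(A|B,C) yields a sampler for Pr(A,B|C). -/
theorem sbind_sound {α β γ : Type*} [MeasurableSpace α] [MeasurableSpace β] [MeasurableSpace γ]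
    (μ : Measure α) (ν : Measure β) (ρ : Measure γ)
    [SigmaFinite μ] [SigmaFinite ν] [SigmaFinite ρ]
    (p : α → β → γ → ℝ≥0∞)
    (hp : Measurable fun x : α × β × γ => p x.1 x.2.1 x.2.2)
    (c : γ)
    (hC : 0 < ∫⁻ b', ∫⁻ a', p a' b' c ∂μ ∂ν)
    (hC' : (∫⁻ b', ∫⁻ a', p a' b' c ∂μ ∂ν) < ∞)
    (hBC : ∀ᵐ b ∂ν, 0 < (∫⁻ a', p a' b c ∂μ) ∧ (∫⁻ a', p a' b c ∂μ) < ∞)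
    (κ : Kernel β α) [IsMarkovKernel κ]
    (hκ : ∀ b : β, κ b = μ.withDensity fun a => p a b c / ∫⁻ a', p a' b c ∂μ) :
    (ν.withDensity fun b =>
        (∫⁻ a', p a' b c ∂μ) / ∫⁻ b', ∫⁻ a', p a' b' c ∂μ ∂ν) ⊗ₘ κ =
      (ν.prod μ).withDensity fun x =>
        p x.2 x.1 c / ∫⁻ b', ∫⁻ a', p a' b' c ∂μ ∂ν :=
  sbind_sound_general μ ν p hp c hBC κ hκ
end

section
/- Let α be a measurable space, β a standard Borel space, and ρ a probability measure on α × β, with disintegration ρ = ρ.fst ⊗ₘ ρ.condKernel where ρ.condKernel is the conditional kernel from α to β. Let κ be a Markov kernel from α × β to β such that for ρ.fst-almost every a, the conditional measure is invariant: (ρ.condKernel a).bind (fun b => κ (a,b)) = ρ.condKernel a. Define the kernel K from α × β to α × β by K (a,b) = (κ (a,b)).map (fun b' => (a, b')), i.e., K resamples the second coordinate using κ and leaves the first coordinate unchanged. Then ρ.bind K = ρ. (This is the sub-lemma in the paper's KCOMBINE soundness proof: a kernel that is invariant for the conditional distribution Pr(B | A) is invariant for the joint distribution Pr(A, B) when it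 does not modify A.) -/
open MeasureTheory ProbabilityTheory
open scoped ProbabilityTheory

/-!
Disintegrate `ρ = ρ.fst ⊗ₘ ρ.condKernel` and compute fibre by fibre: since the kernel never moves
the first coordinate, the mass it puts on `s` starting from the fibre over `a` is
`∫⁻ b, κ (a, b) sₐ ∂(ρ.condKernel a)`, which equals `ρ.condKernel a sₐ` by invariance.
Integrating over `ρ.fst` gives back `ρ s`.
-/

namespace ProbabilityTheory.Kernel

variable {α β γ : Type*} [MeasurableSpace α] [MeasurableSpace β] [MeasurableSpace γ]

lemma measurable_map_prodMk_fst (κ : Kernel (α × β) γ) [IsSFiniteKernel κ] :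
    Measurable fun x : α × β => (κ x).map (Prod.mk x.1) := by
  refine Measure.measurable_of_measurable_coe _ fun s hs => ?_
  simp_rw [Measure.map_apply measurable_prodMk_left hs]
  exact measurable_kernel_prodMk_left ((measurable_fst.fst.prodMk measurable_snd) hs)

end ProbabilityTheory.Kernel

namespace MeasureTheory.Measure

variable {α β : Type*} [MeasurableSpace α] [MeasurableSpace β]

theorem bind_map_prodMk_fst_compProd_of_ae_bind_eq {μ : Measure α} [SFinite μ]
    {η : Kernel α β} [IsSFiniteKernel η] {κ : Kernel (α × β) β} [IsSFiniteKernel κ]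
    (hinv : ∀ᵐ a ∂μ, (η a).bind (fun b => κ (a, b)) = η a) :
    (μ ⊗ₘ η).bind (fun x => (κ x).map (Prod.mk x.1)) = μ ⊗ₘ η := by
  ext s hs
  have hsection : ∀ᵐ a ∂μ, ∫⁻ b, κ (a, b) (Prod.mk a ⁻¹' s) ∂η a = η a (Prod.mk a ⁻¹' s) := by
    filter_upwards [hinv] with a ha
    rw [← bind_apply (f := fun b => κ (a, b)) (measurable_prodMk_left hs)
      (κ.measurable.comp measurable_prodMk_left).aemeasurable, ha]
  have hmeas : Measurable fun x : α × β => κ x (Prod.mk x.1 ⁻¹' s) :=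
    Kernel.measurable_kernel_prodMk_left ((measurable_fst.fst.prodMk measurable_snd) hs)
  calc (μ ⊗ₘ η).bind (fun x => (κ x).map (Prod.mk x.1)) s
      = ∫⁻ x, κ x (Prod.mk x.1 ⁻¹' s) ∂(μ ⊗ₘ η) := by
        simp_rw [bind_apply hs (Kernel.measurable_map_prodMk_fst κ).aemeasurable,
          map_apply measurable_prodMk_left hs]
    _ = ∫⁻ a, η a (Prod.mk a ⁻¹' s) ∂μ := by
        rw [lintegral_compProd hmeas, lintegral_congr_ae hsection]
    _ = (μ ⊗ₘ η) s := (compProd_apply hs).symm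

end MeasureTheory.Measure

theorem kcombine_conditional_invariant_general {α β : Type*}
    [MeasurableSpace α] [MeasurableSpace β] [StandardBorelSpace β] [Nonempty β]
    (ρ : Measure (α × β)) [IsProbabilityMeasure ρ]
    (κ : Kernel (α × β) β) [IsMarkovKernel κ]
    (hinv : ∀ᵐ a ∂ρ.fst,
      (ρ.condKernel a).bind (fun b => κ (a, b)) = ρ.condKernel a) :
    ρ.bind (fun x : α × β => (κ x).map (fun b' => (x.1, b'))) = ρ := by
  simpa only [ρ.disintegrate ρ.condKernel] using
    Measure.bind_map_prodMk_fst_compProd_of_ae_bind_eq hinv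

/-- Sub-lemma of the KCOMBINE soundness proof: a kernel that is invariant for
the conditional distribution Pr(B | A) is invariant for the joint
distribution Pr(A, B) when it does not modify A. -/
theorem kcombine_conditional_invariant {α β : Type*}
    [MeasurableSpace α] [MeasurableSpace β] [StandardBorelSpace β] [Nonempty β]
    (ρ : Measure (α × β)) [IsProbabilityMeasure ρ]
    (hdis : ρ = ρ.fst ⊗ₘ ρ.condKernel)
    (κ : Kernel (α × β) β) [IsMarkovKernel κ]
    (hinv : ∀ᵐ a ∂ρ.fst,
      (ρ.condKernel a).bind (fun b => κ (a, b)) = ρ.condKernel a) :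
    ρ.bind (fun x : α × β => (κ x).map (fun b' => (x.1, b'))) = ρ :=
  kcombine_conditional_invariant_general ρ κ hinv
end

section
/- Fix b ∈ β and c ∈ γ, and suppose 0 < p_B(b) < ∞, 0 < p_BC(b,c) < ∞, and 0 < p_AB(a,b) < ∞ for μ-almost every a. Then for every measurable f : α → ℝ≥0∞, the self-normalized importance-weighted expectation equals the conditional expectation: (∫⁻ f(a) * J(C|A,B)(a,b,c) * J(A|B)(a,b) ∂μ(a)) / (∫⁻ J(C|A,B)(a,b,c) * J(A|B)(a,b) ∂μ(a)) = ∫⁻ f(a) * J(A|B,C)(a,b,c) ∂μ(a). (This is the soundness of Shuffle's EFACT rule for likelihood weighting: reweighting samples from Pr(A|B) by the density of Pr(C|A,B) and normalizing yields expectations under the posterior Pr(A|B,C).) -/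
/-!
Wherever `p_AB(a,b)` is finite and positive, the importance weight
`J(C|A,B) · J(A|B) = (p / p_AB) · (p_AB / p_B)` telescopes to `p(a,b,c) / p_B(b)`. The constant
factor `1 / p_B(b)` cancels in the self-normalization, and `∫ p(a,b,c) dμ(a) = p_BC(b,c)` is
exactly the normalizer of the posterior.
-/

open MeasureTheory ENNReal

protected theorem ENNReal.div_mul_div_cancel {a b c : ℝ≥0∞} (hb : b ≠ 0) (hb' : b ≠ ∞) :
    a / b * (b / c) = a / c := by
  rw [div_eq_mul_inv, mul_assoc, ← mul_div_assoc, ENNReal.inv_mul_cancel hb hb', one_div,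
    div_eq_mul_inv]

section SelfNormalization

variable {α : Type*} [MeasurableSpace α] {μ : Measure α} {r : ℝ≥0∞}

theorem lintegral_div_const_of_ne_zero (hr : r ≠ 0) (g : α → ℝ≥0∞) :
    ∫⁻ a, g a / r ∂μ = (∫⁻ a, g a ∂μ) / r := by
  simp_rw [div_eq_mul_inv]
  exact lintegral_mul_const' _ _ (ENNReal.inv_ne_top.2 hr)

theorem lintegral_mul_div_const_of_ne_zero (hr : r ≠ 0) (f g : α → ℝ≥0∞) :
    ∫⁻ a, f a * (g a / r) ∂μ = (∫⁻ a, f a * g a ∂μ) / r := by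
  simp_rw [← mul_div_assoc]
  exact lintegral_div_const_of_ne_zero hr _

theorem lintegral_mul_div_const_div_lintegral_div_const (hr : r ≠ 0) (hr' : r ≠ ∞)
    (f g : α → ℝ≥0∞) :
    (∫⁻ a, f a * (g a / r) ∂μ) / ∫⁻ a, g a / r ∂μ = (∫⁻ a, f a * g a ∂μ) / ∫⁻ a, g a ∂μ := by
  rw [lintegral_mul_div_const_of_ne_zero hr, lintegral_div_const_of_ne_zero hr,
    div_eq_mul_inv _ r, div_eq_mul_inv _ r,
    ENNReal.mul_div_mul_right _ _ (ENNReal.inv_ne_zero.2 hr') (ENNReal.inv_ne_top.2 hr)]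

end SelfNormalization

theorem efact_sound_general {α β γ : Type*} [MeasurableSpace α] [MeasurableSpace γ]
    (μ : Measure α) (ρ : Measure γ)
    (p : α → β → γ → ℝ≥0∞)
    (b : β) (c : γ)
    (hB : 0 < ∫⁻ a', ∫⁻ c', p a' b c' ∂ρ ∂μ)
    (hB' : (∫⁻ a', ∫⁻ c', p a' b c' ∂ρ ∂μ) < ∞)
    (hBC : 0 < ∫⁻ a', p a' b c ∂μ)
    (hAB : ∀ᵐ a ∂μ, 0 < (∫⁻ c', p a b c' ∂ρ) ∧ (∫⁻ c', p a b c' ∂ρ) < ∞)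
    (f : α → ℝ≥0∞) :
    (∫⁻ a, f a * (p a b c / ∫⁻ c', p a b c' ∂ρ) *
        ((∫⁻ c', p a b c' ∂ρ) / ∫⁻ a', ∫⁻ c', p a' b c' ∂ρ ∂μ) ∂μ) /
      (∫⁻ a, (p a b c / ∫⁻ c', p a b c' ∂ρ) *
        ((∫⁻ c', p a b c' ∂ρ) / ∫⁻ a', ∫⁻ c', p a' b c' ∂ρ ∂μ) ∂μ) =
    ∫⁻ a, f a * (p a b c / ∫⁻ a', p a' b c ∂μ) ∂μ := by
  set pB := ∫⁻ a', ∫⁻ c', p a' b c' ∂ρ ∂μ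
  have hweight : ∀ᵐ a ∂μ,
      p a b c / (∫⁻ c', p a b c' ∂ρ) * ((∫⁻ c', p a b c' ∂ρ) / pB) = p a b c / pB :=
    hAB.mono fun a ha => ENNReal.div_mul_div_cancel ha.1.ne' ha.2.ne
  simp_rw [mul_assoc]
  rw [lintegral_congr_ae (hweight.mono fun a ha => congrArg (f a * ·) ha),
    lintegral_congr_ae hweight,
    lintegral_mul_div_const_div_lintegral_div_const hB.ne' hB'.ne,
    lintegral_mul_div_const_of_ne_zero hBC.ne']

/-- Soundness of Shuffle's EFACT rule for likelihood weighting: reweighting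
samples from Pr(A|B) by the density of Pr(C|A,B) and self-normalizing yields
expectations under the posterior Pr(A|B,C). -/
theorem efact_sound {α β γ : Type*} [MeasurableSpace α] [MeasurableSpace β] [MeasurableSpace γ]
    (μ : Measure α) (ν : Measure β) (ρ : Measure γ)
    [SigmaFinite μ] [SigmaFinite ν] [SigmaFinite ρ]
    (p : α → β → γ → ℝ≥0∞)
    (hp : Measurable fun x : α × β × γ => p x.1 x.2.1 x.2.2)
    (b : β) (c : γ)
    (hB : 0 < ∫⁻ a', ∫⁻ c', p a' b c' ∂ρ ∂μ)
    (hB' : (∫⁻ a', ∫⁻ c', p a' b c' ∂ρ ∂μ) < ∞)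
    (hBC : 0 < ∫⁻ a', p a' b c ∂μ) (hBC' : (∫⁻ a', p a' b c ∂μ) < ∞)
    (hAB : ∀ᵐ a ∂μ, 0 < (∫⁻ c', p a b c' ∂ρ) ∧ (∫⁻ c', p a b c' ∂ρ) < ∞)
    (f : α → ℝ≥0∞) (hf : Measurable f) :
    (∫⁻ a, f a * (p a b c / ∫⁻ c', p a b c' ∂ρ) *
        ((∫⁻ c', p a b c' ∂ρ) / ∫⁻ a', ∫⁻ c', p a' b c' ∂ρ ∂μ) ∂μ) /
      (∫⁻ a, (p a b c / ∫⁻ c', p a b c' ∂ρ) *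
        ((∫⁻ c', p a b c' ∂ρ) / ∫⁻ a', ∫⁻ c', p a' b c' ∂ρ ∂μ) ∂μ) =
    ∫⁻ a, f a * (p a b c / ∫⁻ a', p a' b c ∂μ) ∂μ :=
  efact_sound_general μ ρ p b c hB hB' hBC hAB f
end
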